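/- Let d ≥ 2, let l ≥ 3 be an integer, let w₁,…,w_d be an orthonormal basis of ℝ^d, and let b ∈ ℝ^d. Define L : ℝ × S^{d−1} → ℝ by L(a, θ) = a² + 2a Σ_{j=1}^d b_j ⟨θ, w_j⟩^l (the single-node loss for the polynomial potential Φ(θ, w) = (θᵀw)^l on the unit sphere). If (a, θ) is a local minimum of L on ℝ × S^{d−1} with a ≠ 0, then θ = w_j or θ = −w_j for some j. Equivalently, every critical point of L with a ≠ 0 at which θ has at least two nonzero coordinates ⟨θ, w_i⟩, ⟨θ, w_j⟩ (i ≠ j) has a direction of strictly negative curvature in the tangent space and so is not a local minimum. -/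

import Mathlib

open Finset RealInnerProductSpace
open Filter Set Topology Real

/-! Write `c j = ⟪θ, w j⟫`. Stationarity in `a` gives `a = -∑ⱼ bⱼ cⱼ ^ l`. If two coordinates
`c p`, `c q` are nonzero, rotate `θ` in the plane of `w p` and `w q`: the first variation forces
`b p * c p ^ (l - 2) = b q * c q ^ (l - 2) =: μ`, and the second variation is
`2 a l (l - 2) μ (c p ^ 2 + c q ^ 2)`, so `a μ ≥ 0`. Then every nonzero coordinate satisfies
`bⱼ cⱼ ^ l = μ cⱼ ^ 2`, whence `∑ⱼ bⱼ cⱼ ^ l = μ ∑ⱼ cⱼ ^ 2 = μ`, `a = -μ`, and `a μ ≥ 0` forces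
`a = 0`. -/

theorem IsLocalMin.nonneg_of_hasDerivAt_of_hasDerivAt {φ φ' : ℝ → ℝ} {x q : ℝ}
    (hmin : IsLocalMin φ x) (hφ : ∀ t, HasDerivAt φ (φ' t) t) (hφ' : HasDerivAt φ' q x) :
    0 ≤ q := by
  by_contra! hq
  have hderiv : deriv φ = φ' := funext fun t => (hφ t).deriv
  -- By the second-derivative test `x` is also a local maximum, so `φ` is constant near `x`.
  have hmax : IsLocalMax φ x := isLocalMax_of_deriv_deriv_neg
    (by rwa [hderiv, hφ'.deriv]) (by rw [hderiv, ← (hφ x).deriv, hmin.deriv_eq_zero])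
    (hφ x).continuousAt
  have hconst : ∀ᶠ t in 𝓝 x, φ t = φ x :=
    (hmin.and hmax).mono fun t ht => le_antisymm ht.2 ht.1
  have hφ'_zero : φ' =ᶠ[𝓝 x] fun _ => 0 := by
    filter_upwards [eventually_eventually_nhds.mpr hconst] with t ht
    exact ((hφ t).congr_of_eventuallyEq (ht.mono fun s hs => hs.symm)).unique
      (hasDerivAt_const t (φ x))
  exact hq.ne ((hφ'.congr_of_eventuallyEq hφ'_zero.symm).unique (hasDerivAt_const x 0))

theorem IsLocalMinOn.isLocalMin_comp {X β : Type*} [TopologicalSpace X] [Preorder β]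
    {f : X → β} {s : Set X} {γ : ℝ → X} {t₀ : ℝ} (hf : IsLocalMinOn f s (γ t₀))
    (hγ : Continuous γ) (hγs : ∀ t, γ t ∈ s) : IsLocalMin (f ∘ γ) t₀ :=
  (hf.comp_continuousOn (s := univ) (fun t _ => hγs t) hγ.continuousOn (mem_univ t₀)).isLocalMin
    univ_mem

section PlaneRotation

variable {E : Type*} [NormedAddCommGroup E] [InnerProductSpace ℝ E]

/-- For an orthonormal pair `e₁`, `e₂`: rotation of `x` by the angle `t` in their plane, fixing
its orthogonal complement. -/
noncomputable def planeRotation (e₁ e₂ x : E) (t : ℝ) : E :=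
  x + ((cos t - 1) * ⟪x, e₁⟫ - sin t * ⟪x, e₂⟫) • e₁
    + ((cos t - 1) * ⟪x, e₂⟫ + sin t * ⟪x, e₁⟫) • e₂

@[simp]
theorem planeRotation_zero (e₁ e₂ x : E) : planeRotation e₁ e₂ x 0 = x := by
  simp [planeRotation]

theorem continuous_planeRotation (e₁ e₂ x : E) : Continuous (planeRotation e₁ e₂ x) := by
  unfold planeRotation
  fun_prop

theorem inner_planeRotation_of_inner_eq_zero {e₁ e₂ v : E} (h₁ : ⟪e₁, v⟫ = 0) (h₂ : ⟪e₂, v⟫ = 0)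
    (x : E) (t : ℝ) : ⟪planeRotation e₁ e₂ x t, v⟫ = ⟪x, v⟫ := by
  simp [planeRotation, inner_add_left, real_inner_smul_left, h₁, h₂]

variable {e₁ e₂ : E}

theorem inner_planeRotation_left (h₁ : ‖e₁‖ = 1) (h₁₂ : ⟪e₁, e₂⟫ = 0) (x : E) (t : ℝ) :
    ⟪planeRotation e₁ e₂ x t, e₁⟫ = ⟪x, e₁⟫ * cos t - ⟪x, e₂⟫ * sin t := by
  simp only [planeRotation, inner_add_left, real_inner_smul_left, real_inner_self_eq_norm_sq, h₁,
    real_inner_comm e₁ e₂, h₁₂]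
  ring

theorem inner_planeRotation_right (h₂ : ‖e₂‖ = 1) (h₁₂ : ⟪e₁, e₂⟫ = 0) (x : E) (t : ℝ) :
    ⟪planeRotation e₁ e₂ x t, e₂⟫ = ⟪x, e₂⟫ * cos t + ⟪x, e₁⟫ * sin t := by
  simp only [planeRotation, inner_add_left, real_inner_smul_left, real_inner_self_eq_norm_sq, h₂,
    h₁₂]
  ring

theorem norm_planeRotation (h₁ : ‖e₁‖ = 1) (h₂ : ‖e₂‖ = 1) (h₁₂ : ⟪e₁, e₂⟫ = 0) (x : E) (t : ℝ) :
    ‖planeRotation e₁ e₂ x t‖ = ‖x‖ := by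
  have he₁ : ⟪e₁, e₁⟫ = 1 := by rw [real_inner_self_eq_norm_sq, h₁, one_pow]
  have he₂ : ⟪e₂, e₂⟫ = 1 := by rw [real_inner_self_eq_norm_sq, h₂, one_pow]
  rw [← sq_eq_sq₀ (norm_nonneg _) (norm_nonneg _), ← real_inner_self_eq_norm_sq,
    ← real_inner_self_eq_norm_sq]
  simp only [planeRotation, inner_add_left, inner_add_right, real_inner_smul_left,
    real_inner_smul_right, he₁, he₂, h₁₂, real_inner_comm e₁ e₂, real_inner_comm x e₁,
    real_inner_comm x e₂]
  linear_combination (⟪x, e₁⟫ ^ 2 + ⟪x, e₂⟫ ^ 2) * sin_sq_add_cos_sq t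

end PlaneRotation

theorem eq_and_nonneg_of_isLocalMin_rotatedPowerSum {n : ℕ} (hn : 0 < n) {β₁ β₂ c₁ c₂ : ℝ}
    (hc₁ : c₁ ≠ 0) (hc₂ : c₂ ≠ 0)
    (hmin : IsLocalMin (fun t => β₁ * (c₁ * cos t - c₂ * sin t) ^ (n + 2)
      + β₂ * (c₂ * cos t + c₁ * sin t) ^ (n + 2)) 0) :
    β₁ * c₁ ^ n = β₂ * c₂ ^ n ∧ 0 ≤ β₁ * c₁ ^ n := by
  set u : ℝ → ℝ := fun t => c₁ * cos t - c₂ * sin t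
  set v : ℝ → ℝ := fun t => c₂ * cos t + c₁ * sin t
  have hu : ∀ t, HasDerivAt u (-v t) t := fun t => by
    refine (((hasDerivAt_cos t).const_mul c₁).sub ((hasDerivAt_sin t).const_mul c₂)).congr_deriv ?_
    simp only [v]
    ring
  have hv : ∀ t, HasDerivAt v (u t) t := fun t => by
    refine (((hasDerivAt_cos t).const_mul c₂).add ((hasDerivAt_sin t).const_mul c₁)).congr_deriv ?_
    simp only [u]
    ring
  set g' : ℝ → ℝ := fun t => (n + 2) * (β₂ * v t ^ (n + 1) * u t - β₁ * u t ^ (n + 1) * v t)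
  have hg : ∀ t, HasDerivAt (fun t => β₁ * u t ^ (n + 2) + β₂ * v t ^ (n + 2)) (g' t) t :=
    fun t => by
      refine ((((hu t).pow (n + 2)).const_mul β₁).add
        (((hv t).pow (n + 2)).const_mul β₂)).congr_deriv ?_
      simp only [g']
      push_cast
      ring
  have hg' : HasDerivAt g' ((n + 2) * (β₂ * ((n + 1) * c₂ ^ n * c₁ ^ 2 - c₂ ^ (n + 2))
      - β₁ * (c₁ ^ (n + 2) - (n + 1) * c₁ ^ n * c₂ ^ 2))) 0 := by
    have hu0 := hu 0
    have hv0 := hv 0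
    simp only [u, v, cos_zero, sin_zero] at hu0 hv0
    refine (((((hv0.pow (n + 1)).const_mul β₂).mul hu0).sub
      (((hu0.pow (n + 1)).const_mul β₁).mul hv0)).const_mul ((n : ℝ) + 2)).congr_deriv ?_
    simp only [Pi.pow_apply, cos_zero, sin_zero]
    push_cast
    ring
  have hbalance : β₁ * c₁ ^ n = β₂ * c₂ ^ n := by
    have h := hmin.hasDerivAt_eq_zero (hg 0)
    simp only [g', u, v, cos_zero, sin_zero] at h
    have hne : ((n : ℝ) + 2) * c₁ * c₂ ≠ 0 := by positivity
    refine (mul_right_inj' hne).mp ?_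
    linear_combination -h
  have hsecond := hmin.nonneg_of_hasDerivAt_of_hasDerivAt hg hg'
  have hpos : 0 < ((n : ℝ) + 2) * n * (c₁ ^ 2 + c₂ ^ 2) := by
    have : (0 : ℝ) < n := Nat.cast_pos.mpr hn
    have : 0 < c₁ ^ 2 := sq_pos_of_ne_zero hc₁
    positivity
  refine ⟨hbalance, nonneg_of_mul_nonneg_right ?_ hpos⟩
  linear_combination hsecond - ((n : ℝ) + 2) * ((n + 1) * c₁ ^ 2 - c₂ ^ 2) * hbalance

section SingleNodeLoss

variable {ι E : Type*} [Fintype ι] [NormedAddCommGroup E] [InnerProductSpace ℝ E]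

noncomputable def singleNodeLoss (w : ι → E) (b : ι → ℝ) (l : ℕ) (x : ℝ × E) : ℝ :=
  x.1 ^ 2 + 2 * x.1 * ∑ j, b j * ⟪x.2, w j⟫ ^ l

variable {w : ι → E} {b : ι → ℝ} {l : ℕ} {a : ℝ} {θ : E}

theorem eq_neg_sum_of_isLocalMinOn_singleNodeLoss (hθ : ‖θ‖ = 1)
    (hmin : IsLocalMinOn (singleNodeLoss w b l) {x | ‖x.2‖ = 1} (a, θ)) :
    a = -∑ j, b j * ⟪θ, w j⟫ ^ l := by
  set f := ∑ j, b j * ⟪θ, w j⟫ ^ l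
  have hloc : IsLocalMin (fun t : ℝ => t ^ 2 + 2 * t * f) a :=
    hmin.isLocalMin_comp (γ := fun t => (t, θ)) (by fun_prop) fun _ => hθ
  have hderiv : HasDerivAt (fun t : ℝ => t ^ 2 + 2 * t * f) (2 * a + 2 * f) a := by
    refine ((hasDerivAt_pow 2 a).add (((hasDerivAt_id a).const_mul 2).mul_const f)).congr_deriv ?_
    norm_num
  linarith [hloc.hasDerivAt_eq_zero hderiv]

theorem isLocalMin_rotatedPowerSum_of_isLocalMinOn_singleNodeLoss (hw : Orthonormal ℝ w)
    {p q : ι} (hpq : p ≠ q) (hθ : ‖θ‖ = 1)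
    (hmin : IsLocalMinOn (singleNodeLoss w b l) {x | ‖x.2‖ = 1} (a, θ)) :
    IsLocalMin (fun t => a * b p * (⟪θ, w p⟫ * cos t - ⟪θ, w q⟫ * sin t) ^ l
      + a * b q * (⟪θ, w q⟫ * cos t + ⟪θ, w p⟫ * sin t) ^ l) 0 := by
  set g := fun t => a * b p * (⟪θ, w p⟫ * cos t - ⟪θ, w q⟫ * sin t) ^ l
      + a * b q * (⟪θ, w q⟫ * cos t + ⟪θ, w p⟫ * sin t) ^ l
  set γ : ℝ → ℝ × E := fun t => (a, planeRotation (w p) (w q) θ t)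
  have hγ : IsLocalMin (singleNodeLoss w b l ∘ γ) 0 := by
    refine IsLocalMinOn.isLocalMin_comp (by simpa [γ] using hmin)
      (continuous_const.prodMk (continuous_planeRotation _ _ _)) fun t => ?_
    simp only [γ, mem_ofPred_eq, norm_planeRotation (hw.1 p) (hw.1 q) (hw.2 hpq), hθ]
  have hloss : ∀ t, singleNodeLoss w b l (γ t) = singleNodeLoss w b l (a, θ) + 2 * (g t - g 0) := by
    intro t
    have hrest : ∑ j, b j * ⟪(γ t).2, w j⟫ ^ l - ∑ j, b j * ⟪θ, w j⟫ ^ l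
        = b p * ((⟪θ, w p⟫ * cos t - ⟪θ, w q⟫ * sin t) ^ l - ⟪θ, w p⟫ ^ l)
          + b q * ((⟪θ, w q⟫ * cos t + ⟪θ, w p⟫ * sin t) ^ l - ⟪θ, w q⟫ ^ l) := by
      rw [← Finset.sum_sub_distrib, Fintype.sum_eq_add p q hpq fun j hj => by
        rw [inner_planeRotation_of_inner_eq_zero (hw.2 (Ne.symm hj.1)) (hw.2 (Ne.symm hj.2)),
          sub_self],
        inner_planeRotation_left (hw.1 p) (hw.2 hpq),
        inner_planeRotation_right (hw.1 q) (hw.2 hpq)]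
      ring
    simp only [singleNodeLoss, g, cos_zero, sin_zero]
    linear_combination 2 * a * hrest
  filter_upwards [hγ] with t ht
  have := hloss t
  simp only [Function.comp_apply, γ, planeRotation_zero] at ht this
  linarith

theorem balance_of_isLocalMinOn_singleNodeLoss (hl : 3 ≤ l) (hw : Orthonormal ℝ w) (ha : a ≠ 0)
    (hθ : ‖θ‖ = 1) (hmin : IsLocalMinOn (singleNodeLoss w b l) {x | ‖x.2‖ = 1} (a, θ))
    {p q : ι} (hpq : p ≠ q) (hp : ⟪θ, w p⟫ ≠ 0) (hq : ⟪θ, w q⟫ ≠ 0) :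
    b p * ⟪θ, w p⟫ ^ (l - 2) = b q * ⟪θ, w q⟫ ^ (l - 2) ∧ 0 ≤ a * (b p * ⟪θ, w p⟫ ^ (l - 2)) := by
  obtain ⟨n, rfl⟩ : ∃ n, l = n + 2 := ⟨l - 2, by omega⟩
  obtain ⟨hbalance, hnonneg⟩ := eq_and_nonneg_of_isLocalMin_rotatedPowerSum (by omega) hp hq
    (isLocalMin_rotatedPowerSum_of_isLocalMinOn_singleNodeLoss hw hpq hθ hmin)
  simp only [Nat.add_sub_cancel, mul_assoc] at hbalance hnonneg ⊢
  exact ⟨mul_left_cancel₀ ha hbalance, hnonneg⟩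

theorem inner_eq_zero_of_isLocalMinOn_singleNodeLoss (hl : 3 ≤ l) (hw : Orthonormal ℝ w)
    (ha : a ≠ 0) (hθ : ‖θ‖ = 1) (hsum : ∑ j, ⟪θ, w j⟫ ^ 2 = 1)
    (hmin : IsLocalMinOn (singleNodeLoss w b l) {x | ‖x.2‖ = 1} (a, θ))
    {p q : ι} (hpq : p ≠ q) (hp : ⟪θ, w p⟫ ≠ 0) : ⟪θ, w q⟫ = 0 := by
  by_contra hq
  set μ := b p * ⟪θ, w p⟫ ^ (l - 2)
  have hpow : ∀ j, ⟪θ, w j⟫ ^ l = ⟪θ, w j⟫ ^ (l - 2) * ⟪θ, w j⟫ ^ 2 := fun j => by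
    rw [← pow_add, Nat.sub_add_cancel (by omega)]
  have hterm : ∀ j, b j * ⟪θ, w j⟫ ^ l = μ * ⟪θ, w j⟫ ^ 2 := by
    intro j
    by_cases hj : ⟪θ, w j⟫ = 0
    · simp [hj, zero_pow (by omega : l ≠ 0)]
    by_cases hjp : j = p
    · rw [hjp, hpow, mul_assoc]
    rw [hpow, ← mul_assoc,
      ← (balance_of_isLocalMinOn_singleNodeLoss hl hw ha hθ hmin (Ne.symm hjp) hp hj).1]
  have haμ : a = -μ := by
    rw [eq_neg_sum_of_isLocalMinOn_singleNodeLoss hθ hmin, Finset.sum_congr rfl fun j _ => hterm j,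
      ← Finset.mul_sum, hsum, mul_one]
  have hnonneg := (balance_of_isLocalMinOn_singleNodeLoss hl hw ha hθ hmin hpq hp hq).2
  rw [haμ] at hnonneg ha
  have hμ : μ = 0 := by nlinarith [sq_nonneg μ]
  exact ha (by rw [hμ, neg_zero])

end SingleNodeLoss

theorem OrthonormalBasis.eq_or_eq_neg_of_inner_eq_zero {ι E : Type*} [Fintype ι]
    [NormedAddCommGroup E] [InnerProductSpace ℝ E] (B : OrthonormalBasis ι ℝ E) {x : E}
    (hx : ‖x‖ = 1) {m : ι} (h : ∀ j ≠ m, ⟪x, B j⟫ = 0) : x = B m ∨ x = -B m := by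
  have hxm : x = ⟪x, B m⟫ • B m := by
    conv_lhs => rw [← B.sum_repr' x]
    rw [Fintype.sum_eq_single m fun j hj => by rw [real_inner_comm, h j hj, zero_smul],
      real_inner_comm]
  have hnorm : |⟪x, B m⟫| = 1 := by
    rw [← hx, hxm, norm_smul, B.norm_eq_one, mul_one, Real.norm_eq_abs, ← hxm]
  rcases (abs_eq zero_le_one).mp hnorm with h1 | h1
  · exact Or.inl (by rw [hxm, h1, one_smul])
  · exact Or.inr (by rw [hxm, h1, neg_one_smul])

theorem stmt16 {d : ℕ} (l : ℕ) (hl : 3 ≤ l)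
    (w : Fin d → EuclideanSpace ℝ (Fin d)) (hw : Orthonormal ℝ w)
    (b : Fin d → ℝ)
    (L : ℝ × EuclideanSpace ℝ (Fin d) → ℝ)
    (hL : L = fun p => p.1 ^ 2 + 2 * p.1 * ∑ j, b j * ⟪p.2, w j⟫ ^ l) :
    ∀ (a : ℝ) (θ : EuclideanSpace ℝ (Fin d)), ‖θ‖ = 1 → a ≠ 0 →
      IsLocalMinOn L {p : ℝ × EuclideanSpace ℝ (Fin d) | ‖p.2‖ = 1} (a, θ) →
      ∃ j, θ = w j ∨ θ = -w j := by
  intro a θ hθ ha hmin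
  replace hmin : IsLocalMinOn (singleNodeLoss w b l) _ (a, θ) := hL ▸ hmin
  have hcard : Fintype.card (Fin d) = Module.finrank ℝ (EuclideanSpace ℝ (Fin d)) := by simp
  set B := OrthonormalBasis.mk hw (hw.linearIndependent.span_eq_top_of_card_eq_finrank' hcard).ge
  have hB : ⇑B = w := OrthonormalBasis.coe_mk _ _
  have hsum : ∑ j, ⟪θ, w j⟫ ^ 2 = 1 := by rw [← hB, B.sum_sq_inner_left, hθ, one_pow]
  obtain ⟨m, hm⟩ : ∃ m, ⟪θ, w m⟫ ≠ 0 := by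
    by_contra! h
    simp [h] at hsum
  have hzero : ∀ j ≠ m, ⟪θ, B j⟫ = 0 := fun j hj =>
    hB ▸ inner_eq_zero_of_isLocalMinOn_singleNodeLoss hl hw ha hθ hsum hmin (Ne.symm hj) hm
  exact ⟨m, hB ▸ B.eq_or_eq_neg_of_inner_eq_zero hθ hzero⟩
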